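/- arXiv:2503.22090 — 2 statements merged into one kernel-verified Lean document; each statement's English description precedes it below -/
import Mathlib

section
/- Let l > 0, (a, M) subextremal Kerr–de Sitter parameters, Ξ = 1 + a²/l², and consider a superradiant frequency (ω, m) with ω = amΞ/(r_s² + a²), r_s ∈ (r₊, r̄₊). Then the function 𝒯(ω, m, r) = ((r² + a²)²/Δ(r))·(ω - amΞ/(r² + a²))² has exactly one critical point in (r₊, r̄₊), located at r = r_s, which is a minimum with 𝒯(ω, m, r_s) = 0; moreover the second derivative of 𝒯 at r_s is strictly positive. -/
/-!
Since `ω (r_s² + a²) = amΞ`, one has `𝒯 = c (r² - r_s²)² / Δ` with `c = (amΞ / (r_s² + a²))² > 0`,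
and `Δ = (r - r̄₋)(r - r₋)(r - r₊)(r̄₊ - r) / l²` because the difference of the two sides is a cubic
with four roots. Hence `𝒯' = (r² - r_s²) · c (4rΔ - (r² - r_s²)Δ') / Δ²`, whose second factor is
positive on `(r₊, r̄₊)`: written in the positive gaps between `0`, the roots, `r` and `r_s`, its
numerator is a polynomial with nonnegative coefficients. The same factorisation gives
`𝒯''(r_s) = 8 c r_s² / Δ(r_s)`.
-/

open Set Filter Topology

open Polynomial in
theorem cubic_eq_zero_of_three_lt_card {R : Type*} [CommRing R] [IsDomain R] {c₃ c₂ c₁ c₀ : R}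
    (s : Finset R) (hs : 3 < s.card) (h : ∀ x ∈ s, c₃ * x ^ 3 + c₂ * x ^ 2 + c₁ * x + c₀ = 0)
    (x : R) : c₃ * x ^ 3 + c₂ * x ^ 2 + c₁ * x + c₀ = 0 := by
  have hp : C c₃ * X ^ 3 + C c₂ * X ^ 2 + C c₁ * X + C c₀ = 0 :=
    eq_zero_of_natDegree_lt_card_of_eval_eq_zero' _ s (fun x hx => by simpa using h x hx)
      (natDegree_cubic_le.trans_lt hs)
  simpa using congrArg (eval x) hp

def quarticOfRoots (r₁ r₂ r₃ r₄ x : ℝ) : ℝ := (x - r₁) * (x - r₂) * (x - r₃) * (r₄ - x)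

theorem hasDerivAt_quarticOfRoots (r₁ r₂ r₃ r₄ x : ℝ) :
    HasDerivAt (quarticOfRoots r₁ r₂ r₃ r₄)
      ((x - r₂) * (x - r₃) * (r₄ - x) + (x - r₁) * (x - r₃) * (r₄ - x)
        + (x - r₁) * (x - r₂) * (r₄ - x) - (x - r₁) * (x - r₂) * (x - r₃)) x := by
  have h := ((((hasDerivAt_id' x).sub_const r₁).fun_mul ((hasDerivAt_id' x).sub_const r₂)).fun_mul
    ((hasDerivAt_id' x).sub_const r₃)).fun_mul ((hasDerivAt_id' x).const_sub r₄)
  exact h.congr_deriv (by ring)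

theorem quarticOfRoots_pos {r₁ r₂ r₃ r₄ x : ℝ} (h₁₃ : r₁ < r₃) (h₂₃ : r₂ < r₃)
    (hx : x ∈ Ioo r₃ r₄) : 0 < quarticOfRoots r₁ r₂ r₃ r₄ x := by
  obtain ⟨hx₃, hx₄⟩ := hx
  have := sub_pos.2 (h₁₃.trans hx₃)
  have := sub_pos.2 (h₂₃.trans hx₃)
  have := sub_pos.2 hx₃
  have := sub_pos.2 hx₄
  unfold quarticOfRoots
  positivity

theorem four_mul_quarticOfRoots_sub_pos {r₁ r₂ r₃ r₄ s x : ℝ} (h₁ : r₁ < 0) (h₂ : 0 ≤ r₂)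
    (h₂₃ : r₂ < r₃) (hs : s ∈ Ioo r₃ r₄) (hx : x ∈ Ioo r₃ r₄) :
    0 < 4 * x * quarticOfRoots r₁ r₂ r₃ r₄ x
      - (x ^ 2 - s ^ 2) * deriv (quarticOfRoots r₁ r₂ r₃ r₄) x := by
  rw [(hasDerivAt_quarticOfRoots r₁ r₂ r₃ r₄ x).deriv, quarticOfRoots]
  obtain ⟨hs₃, hs₄⟩ := hs
  obtain ⟨hx₃, hx₄⟩ := hx
  obtain ⟨α, hα, rfl⟩ : ∃ α > 0, r₁ = -α := ⟨-r₁, by linarith, by ring⟩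
  obtain ⟨γ, hγ, rfl⟩ : ∃ γ > 0, r₃ = r₂ + γ := ⟨r₃ - r₂, by linarith, by ring⟩
  -- in these coordinates the expression is a polynomial with nonnegative coefficients
  rcases le_total x s with hxs | hsx
  · obtain ⟨δ, hδ, rfl⟩ : ∃ δ > 0, x = r₂ + γ + δ := ⟨x - r₂ - γ, by linarith, by ring⟩
    obtain ⟨u, hu, rfl⟩ : ∃ u ≥ 0, s = r₂ + γ + δ + u := ⟨s - r₂ - γ - δ, by linarith, by ring⟩
    obtain ⟨v, hv, rfl⟩ : ∃ v > 0, r₄ = r₂ + γ + δ + u + v :=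
      ⟨r₄ - r₂ - γ - δ - u, by linarith, by ring⟩
    ring_nf
    positivity
  · obtain ⟨δ, hδ, rfl⟩ : ∃ δ > 0, s = r₂ + γ + δ := ⟨s - r₂ - γ, by linarith, by ring⟩
    obtain ⟨u, hu, rfl⟩ : ∃ u ≥ 0, x = r₂ + γ + δ + u := ⟨x - r₂ - γ - δ, by linarith, by ring⟩
    obtain ⟨v, hv, rfl⟩ : ∃ v > 0, r₄ = r₂ + γ + δ + u + v :=
      ⟨r₄ - r₂ - γ - δ - u, by linarith, by ring⟩
    ring_nf
    positivity

theorem eq_quarticOfRoots_div {l a M r₁ r₂ r₃ r₄ : ℝ} {Δ : ℝ → ℝ}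
    (hΔ : ∀ r, Δ r = (r ^ 2 + a ^ 2) * (1 - r ^ 2 / l ^ 2) - 2 * M * r)
    (h₁₂ : r₁ < r₂) (h₂₃ : r₂ < r₃) (h₃₄ : r₃ < r₄)
    (hroots : Δ r₁ = 0 ∧ Δ r₂ = 0 ∧ Δ r₃ = 0 ∧ Δ r₄ = 0) :
    Δ = fun r => quarticOfRoots r₁ r₂ r₃ r₄ r / l ^ 2 := by
  have hcard : 3 < ({r₁, r₂, r₃, r₄} : Finset ℝ).card := by
    grind [Finset.card_insert_of_notMem, Finset.card_pair]
  -- the coefficients of `Δ r - quarticOfRoots r₁ r₂ r₃ r₄ r / l ^ 2`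
  have hcubic := cubic_eq_zero_of_three_lt_card _ hcard
    (c₃ := -(r₁ + r₂ + r₃ + r₄) / l ^ 2)
    (c₂ := 1 - a ^ 2 / l ^ 2 + (r₁ * r₂ + r₁ * r₃ + r₁ * r₄ + r₂ * r₃ + r₂ * r₄ + r₃ * r₄) / l ^ 2)
    (c₁ := -(2 * M) - (r₁ * r₂ * r₃ + r₁ * r₂ * r₄ + r₁ * r₃ * r₄ + r₂ * r₃ * r₄) / l ^ 2)
    (c₀ := a ^ 2 + r₁ * r₂ * r₃ * r₄ / l ^ 2) ?_
  · funext r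
    simp only [quarticOfRoots]
    linear_combination hΔ r + hcubic r
  · intro x hx
    have hx' : Δ x = 0 ∧ quarticOfRoots r₁ r₂ r₃ r₄ x = 0 := by
      simp only [Finset.mem_insert, Finset.mem_singleton] at hx
      rcases hx with rfl | rfl | rfl | rfl <;> simp [quarticOfRoots, hroots]
    simp only [quarticOfRoots] at hx'
    linear_combination hx'.1 - hΔ x - hx'.2 / l ^ 2

section
variable {Δ : ℝ → ℝ} {c s x : ℝ}

theorem hasDerivAt_mul_sq_sub_sq_div (hΔ : DifferentiableAt ℝ Δ x) (hx : Δ x ≠ 0) :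
    HasDerivAt (fun r => c * (r ^ 2 - s ^ 2) ^ 2 / Δ r)
      ((x ^ 2 - s ^ 2) * (c * (4 * x * Δ x - (x ^ 2 - s ^ 2) * deriv Δ x) / Δ x ^ 2)) x := by
  have h := ((((hasDerivAt_pow 2 x).sub_const (s ^ 2)).pow 2).const_mul c).div hΔ.hasDerivAt hx
  exact h.congr_deriv (by simp only [Pi.pow_apply]; field_simp; ring)

theorem deriv_mul_sq_sub_sq_div_eq_zero_iff (hc : c ≠ 0) (hx₀ : 0 < x) (hs₀ : 0 < s)
    (hΔ : DifferentiableAt ℝ Δ x) (hx : Δ x ≠ 0)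
    (hkey : 4 * x * Δ x - (x ^ 2 - s ^ 2) * deriv Δ x ≠ 0) :
    deriv (fun r => c * (r ^ 2 - s ^ 2) ^ 2 / Δ r) x = 0 ↔ x = s := by
  rw [(hasDerivAt_mul_sq_sub_sq_div hΔ hx).deriv]
  simp [hc, hx, hkey, sub_eq_zero, sq_eq_sq₀ hx₀.le hs₀.le]

theorem mul_sq_sub_sq_div_pos (hc : 0 < c) (hx₀ : 0 < x) (hs₀ : 0 < s) (hx : 0 < Δ x)
    (hxs : x ≠ s) : 0 < c * (x ^ 2 - s ^ 2) ^ 2 / Δ x := by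
  have : x ^ 2 - s ^ 2 ≠ 0 := by rwa [sub_ne_zero, Ne, sq_eq_sq₀ hx₀.le hs₀.le]
  positivity

theorem hasDerivAt_deriv_mul_sq_sub_sq_div (hΔ : ContDiff ℝ 2 Δ) (hs : Δ s ≠ 0) :
    HasDerivAt (deriv fun r => c * (r ^ 2 - s ^ 2) ^ 2 / Δ r) (8 * c * s ^ 2 / Δ s) s := by
  obtain ⟨hd, -, hd'⟩ := (contDiff_succ_iff_deriv (n := 1)).mp hΔ
  have hev : (deriv fun r => c * (r ^ 2 - s ^ 2) ^ 2 / Δ r) =ᶠ[𝓝 s] fun r =>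
      (r ^ 2 - s ^ 2) * (c * (4 * r * Δ r - (r ^ 2 - s ^ 2) * deriv Δ r) / Δ r ^ 2) :=
    ((hd s).continuousAt.eventually_ne hs).mono fun r hr =>
      (hasDerivAt_mul_sq_sub_sq_div (hd r) hr).deriv
  have hfactor : DifferentiableAt ℝ
      (fun r => c * (4 * r * Δ r - (r ^ 2 - s ^ 2) * deriv Δ r) / Δ r ^ 2) s := by
    have := hd s
    have := (hd'.differentiable (by norm_num)) s
    fun_prop (disch := exact pow_ne_zero 2 hs)
  refine ((((hasDerivAt_pow 2 s).sub_const (s ^ 2)).mul hfactor.hasDerivAt).congr_of_eventuallyEq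
    hev).congr_deriv ?_
  field_simp
  ring

end

theorem T_unique_critical_point_superradiant_general (l a M : ℝ) (hl : 0 < l)
    (Δ : ℝ → ℝ) (hΔ : ∀ r, Δ r = (r ^ 2 + a ^ 2) * (1 - r ^ 2 / l ^ 2) - 2 * M * r)
    (rbm rm rp rbp : ℝ)
    (horder : rbm < 0 ∧ 0 ≤ rm ∧ rm < rp ∧ rp < rbp)
    (hroots : Δ rbm = 0 ∧ Δ rm = 0 ∧ Δ rp = 0 ∧ Δ rbp = 0)
    (Ξ : ℝ) (ω : ℝ) (m : ℤ)
    (hsr : a * (m : ℝ) * ω ∈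
      Set.Ioo (a ^ 2 * (m : ℝ) ^ 2 * Ξ / (rbp ^ 2 + a ^ 2))
        (a ^ 2 * (m : ℝ) ^ 2 * Ξ / (rp ^ 2 + a ^ 2)))
    (rs : ℝ) (hrs : rs ∈ Set.Ioo rp rbp)
    (hωrs : ω = a * (m : ℝ) * Ξ / (rs ^ 2 + a ^ 2))
    (T : ℝ → ℝ)
    (hT : ∀ r, T r =
      (r ^ 2 + a ^ 2) ^ 2 / Δ r * (ω - a * (m : ℝ) * Ξ / (r ^ 2 + a ^ 2)) ^ 2) :
    (∀ r ∈ Set.Ioo rp rbp, deriv T r = 0 ↔ r = rs) ∧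
    T rs = 0 ∧
    (∀ r ∈ Set.Ioo rp rbp, r ≠ rs → 0 < T r) ∧
    0 < deriv (deriv T) rs := by
  obtain ⟨hbm, hm, hmp, hpb⟩ := horder
  have hk : a ^ 2 * (m : ℝ) ^ 2 * Ξ ≠ 0 := by
    rintro hk
    simp [hk] at hsr
  obtain ⟨⟨ha, hm₀⟩, hΞ₀⟩ : (a ≠ 0 ∧ (m : ℝ) ≠ 0) ∧ Ξ ≠ 0 := by simpa using hk
  have hrs₀ : 0 < rs := by linarith [hrs.1]
  have hΔeq := eq_quarticOfRoots_div hΔ (hbm.trans_le hm) hmp hpb hroots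
  have hΔpos : ∀ x ∈ Ioo rp rbp, 0 < Δ x := fun x hx => by
    rw [hΔeq]
    exact div_pos (quarticOfRoots_pos (by linarith) hmp hx) (by positivity)
  have hkey : ∀ x ∈ Ioo rp rbp, 0 < 4 * x * Δ x - (x ^ 2 - rs ^ 2) * deriv Δ x := fun x hx => by
    have := div_pos (four_mul_quarticOfRoots_sub_pos hbm hm hmp hrs hx) (by positivity : 0 < l ^ 2)
    rw [hΔeq, ((hasDerivAt_quarticOfRoots ..).differentiableAt.hasDerivAt.div_const _).deriv]
    rwa [sub_div, mul_div_assoc, mul_div_assoc] at this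
  have hΔsmooth : ContDiff ℝ 2 Δ := by
    rw [funext hΔ]
    fun_prop
  have hA : ∀ r : ℝ, r ^ 2 + a ^ 2 ≠ 0 := fun r => by positivity
  have hT' : T = fun r => (a * m * Ξ / (rs ^ 2 + a ^ 2)) ^ 2 * (r ^ 2 - rs ^ 2) ^ 2 / Δ r :=
    funext fun r => by
      rw [hT, hωrs]
      field_simp [hA r, hA rs]
      ring
  have hc : 0 < (a * m * Ξ / (rs ^ 2 + a ^ 2)) ^ 2 := by positivity
  subst hT'
  refine ⟨fun x hx => deriv_mul_sq_sub_sq_div_eq_zero_iff hc.ne' (by linarith [hx.1]) hrs₀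
      (hΔsmooth.differentiable (by norm_num) x) (hΔpos x hx).ne' (hkey x hx).ne', by simp,
    fun x hx hxs => mul_sq_sub_sq_div_pos hc (by linarith [hx.1]) hrs₀ (hΔpos x hx) hxs, ?_⟩
  rw [(hasDerivAt_deriv_mul_sq_sub_sq_div hΔsmooth (hΔpos rs hrs).ne').deriv]
  have := hΔpos rs hrs
  positivity

/-- For superradiant frequencies, `𝒯` has a unique critical point in `(r₊, r̄₊)`,
located at `r_s`, which is a minimum with `𝒯 = 0` there, and with strictly positive
second derivative at `r_s`. -/
theorem T_unique_critical_point_superradiant (l a M : ℝ) (hl : 0 < l) (hM : 0 < M)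
    (Δ : ℝ → ℝ) (hΔ : ∀ r, Δ r = (r ^ 2 + a ^ 2) * (1 - r ^ 2 / l ^ 2) - 2 * M * r)
    (rbm rm rp rbp : ℝ)
    (horder : rbm < 0 ∧ 0 ≤ rm ∧ rm < rp ∧ rp < rbp)
    (hroots : Δ rbm = 0 ∧ Δ rm = 0 ∧ Δ rp = 0 ∧ Δ rbp = 0)
    (hall : ∀ r, Δ r = 0 → r = rbm ∨ r = rm ∨ r = rp ∨ r = rbp)
    (Ξ : ℝ) (hΞ : Ξ = 1 + a ^ 2 / l ^ 2) (ω : ℝ) (m : ℤ)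
    (hsr : a * (m : ℝ) * ω ∈
      Set.Ioo (a ^ 2 * (m : ℝ) ^ 2 * Ξ / (rbp ^ 2 + a ^ 2))
        (a ^ 2 * (m : ℝ) ^ 2 * Ξ / (rp ^ 2 + a ^ 2)))
    (rs : ℝ) (hrs : rs ∈ Set.Ioo rp rbp)
    (hωrs : ω = a * (m : ℝ) * Ξ / (rs ^ 2 + a ^ 2))
    (T : ℝ → ℝ)
    (hT : ∀ r, T r =
      (r ^ 2 + a ^ 2) ^ 2 / Δ r * (ω - a * (m : ℝ) * Ξ / (r ^ 2 + a ^ 2)) ^ 2) :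
    (∀ r ∈ Set.Ioo rp rbp, deriv T r = 0 ↔ r = rs) ∧
    T rs = 0 ∧
    (∀ r ∈ Set.Ioo rp rbp, r ≠ rs → 0 < T r) ∧
    0 < deriv (deriv T) rs :=
  T_unique_critical_point_superradiant_general l a M hl Δ hΔ rbm rm rp rbp horder hroots Ξ ω m hsr
    rs hrs hωrs T hT
end

section
/- Let u : ℝ → ℂ be C¹ with u and u' bounded, satisfying the outgoing boundary conditions lim_{r*→-∞}(u'(r*) + i(ω - ω₊m)u(r*)) = 0 and lim_{r*→+∞}(u'(r*) - i(ω - ω̄₊m)u(r*)) = 0, and suppose u is a classical solution of u'' + (ω² - V)u = H on ℝ with V real, such that all integrals below converge and |u|²(±∞) := lim_{r*→±∞}|u|²(r*) exist. Then (ω - ω̄₊m)|u|²(+∞) + (ω - ω₊m)|u|²(-∞) = Im ∫_ℝ ū H dr*. -/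
/-!
The flux `Im (ū u')` has derivative `Im (ū u'') = Im (ū H)`: the extra terms `|u'|²` and
`(ω² - V)|u|²` are real. Writing `u' = i c u + (u' - i c u)` shows that at each end the flux
tends to `c |u|²(±∞)` with the outgoing frequency `c`, the remainder vanishing because `|u|` has a
limit there. The improper fundamental theorem of calculus then gives the identity.
-/

open Filter Topology ComplexConjugate

theorem Complex.im_conj_mul_ofReal_mul_self (z : ℂ) (q : ℝ) : (conj z * (q * z)).im = 0 := by
  rw [mul_left_comm, ← Complex.normSq_eq_conj_mul_self, ← Complex.ofReal_mul, Complex.ofReal_im]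

theorem Complex.im_conj_mul_eq_of_add_ofReal_mul_eq {z w h : ℂ} {q : ℝ} (hw : w + q * z = h) :
    (conj z * w).im = (conj z * h).im := by
  rw [← hw, mul_add, Complex.add_im, Complex.im_conj_mul_ofReal_mul_self, add_zero]

theorem hasDerivAt_im_conj_mul_deriv {u : ℝ → ℂ} {x : ℝ} (hu : DifferentiableAt ℝ u x)
    (hu' : DifferentiableAt ℝ (deriv u) x) :
    HasDerivAt (fun y => (conj (u y) * deriv u y).im) (conj (u x) * deriv (deriv u) x).im x := by
  have hprod := hu.hasDerivAt.star.mul hu'.hasDerivAt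
  have hval : (conj (u x) * deriv (deriv u) x).im
      = (conj (deriv u x) * deriv u x + conj (u x) * deriv (deriv u) x).im := by
    rw [Complex.add_im, ← Complex.normSq_eq_conj_mul_self, Complex.ofReal_im, zero_add]
  rw [hval]
  exact Complex.imCLM.hasFDerivAt.comp_hasDerivAt x hprod

theorem tendsto_im_conj_mul_of_tendsto_sub_I_mul {α : Type*} {l : Filter α} {f g : α → ℂ}
    {c L : ℝ} (hf : Tendsto (fun x => ‖f x‖ ^ 2) l (𝓝 L))
    (hg : Tendsto (fun x => g x - Complex.I * c * f x) l (𝓝 0)) :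
    Tendsto (fun x => (conj (f x) * g x).im) l (𝓝 (c * L)) := by
  have hsplit : ∀ x, (conj (f x) * g x).im
      = c * ‖f x‖ ^ 2 + (conj (f x) * (g x - Complex.I * c * f x)).im := by
    intro x
    simp only [Complex.mul_im, Complex.mul_re, Complex.sub_im, Complex.sub_re, Complex.conj_re,
      Complex.conj_im, Complex.I_re, Complex.I_im, Complex.ofReal_re, Complex.ofReal_im,
      Complex.sq_norm, Complex.normSq_apply]
    ring
  have hrem : Tendsto (fun x => conj (f x) * (g x - Complex.I * c * f x)) l (𝓝 0) := by
    rw [tendsto_zero_iff_norm_tendsto_zero]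
    have hnorm : Tendsto (fun x => ‖f x‖) l (𝓝 √L) := by
      simpa [Real.sqrt_sq (norm_nonneg _)] using hf.sqrt
    simpa using hnorm.mul hg.norm
  simpa [hsplit] using (hf.const_mul c).add (Complex.continuous_im.tendsto 0 |>.comp hrem)

open MeasureTheory in
theorem energy_identity_outgoing_general (ω ωp ωbp : ℝ) (m : ℤ)
    (V : ℝ → ℝ) (u H : ℝ → ℂ)
    (hu : ContDiff ℝ 2 u)
    (hout_neg : Filter.Tendsto
      (fun x => deriv u x + Complex.I * ((ω - ωp * (m : ℝ) : ℝ) : ℂ) * u x)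
      Filter.atBot (nhds 0))
    (hout_pos : Filter.Tendsto
      (fun x => deriv u x - Complex.I * ((ω - ωbp * (m : ℝ) : ℝ) : ℂ) * u x)
      Filter.atTop (nhds 0))
    (hode : ∀ x, deriv (deriv u) x + ((ω : ℂ) ^ 2 - (V x : ℂ)) * u x = H x)
    (hint : Integrable (fun x => (starRingEnd ℂ) (u x) * H x))
    (Lneg Lpos : ℝ)
    (hLneg : Filter.Tendsto (fun x => ‖u x‖ ^ 2) Filter.atBot (nhds Lneg))
    (hLpos : Filter.Tendsto (fun x => ‖u x‖ ^ 2) Filter.atTop (nhds Lpos)) :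
    (ω - ωbp * (m : ℝ)) * Lpos + (ω - ωp * (m : ℝ)) * Lneg =
      (∫ x, (starRingEnd ℂ) (u x) * H x).im := by
  have hu' : Differentiable ℝ (deriv u) := (hu.deriv' (n := 1)).differentiable one_ne_zero
  have hflux : ∀ x, HasDerivAt (fun y => (conj (u y) * deriv u y).im) (conj (u x) * H x).im x := by
    intro x
    rw [← Complex.im_conj_mul_eq_of_add_ofReal_mul_eq (q := ω ^ 2 - V x)
      (by push_cast; exact hode x)]
    exact hasDerivAt_im_conj_mul_deriv ((hu.differentiable two_ne_zero) x) (hu' x)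
  have hflux_top := tendsto_im_conj_mul_of_tendsto_sub_I_mul hLpos hout_pos
  have hflux_bot := tendsto_im_conj_mul_of_tendsto_sub_I_mul (c := -(ω - ωp * m)) hLneg
    (hout_neg.congr fun x => by push_cast; ring)
  have him : (∫ x, conj (u x) * H x).im = ∫ x, (conj (u x) * H x).im := (integral_im hint).symm
  rw [him, integral_of_hasDerivAt_of_tendsto hflux hint.im hflux_bot hflux_top]
  ring

open MeasureTheory in
/-- Energy identity for outgoing solutions of Carter's radial ODE:
`(ω - ω̄₊m)|u|²(+∞) + (ω - ω₊m)|u|²(-∞) = Im ∫ ū H`. -/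
theorem energy_identity_outgoing (ω ωp ωbp : ℝ) (m : ℤ)
    (V : ℝ → ℝ) (u H : ℝ → ℂ)
    (hu : ContDiff ℝ 2 u)
    (hbd : ∃ C : ℝ, ∀ x, ‖u x‖ ≤ C ∧ ‖deriv u x‖ ≤ C)
    (hout_neg : Filter.Tendsto
      (fun x => deriv u x + Complex.I * ((ω - ωp * (m : ℝ) : ℝ) : ℂ) * u x)
      Filter.atBot (nhds 0))
    (hout_pos : Filter.Tendsto
      (fun x => deriv u x - Complex.I * ((ω - ωbp * (m : ℝ) : ℝ) : ℂ) * u x)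
      Filter.atTop (nhds 0))
    (hode : ∀ x, deriv (deriv u) x + ((ω : ℂ) ^ 2 - (V x : ℂ)) * u x = H x)
    (hint : Integrable (fun x => (starRingEnd ℂ) (u x) * H x))
    (Lneg Lpos : ℝ)
    (hLneg : Filter.Tendsto (fun x => ‖u x‖ ^ 2) Filter.atBot (nhds Lneg))
    (hLpos : Filter.Tendsto (fun x => ‖u x‖ ^ 2) Filter.atTop (nhds Lpos)) :
    (ω - ωbp * (m : ℝ)) * Lpos + (ω - ωp * (m : ℝ)) * Lneg =
      (∫ x, (starRingEnd ℂ) (u x) * H x).im :=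
  energy_identity_outgoing_general ω ωp ωbp m V u H hu hout_neg hout_pos hode hint Lneg Lpos hLneg
    hLpos
end
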